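/- Let a ∈ ℂ, ε ∈ {1,−1}, and let A, B, C, D, y be differentiable complex-valued functions of τ on a domain with τ ≠ 0, satisfying y² = −AB, y(τ) ≠ 0, A(τ) ≠ 0, B(τ) ≠ 0, and the isomonodromy deformation system A' = 4C y, B' = −4D y, (τC)' = 2a i C − 2τA, (τD)' = −2a i D + 2τB, y' = 2(A D − B C). Define u(τ) := ε τ y(τ), let φ be a differentiable function with e^{2iφ(τ)} = −A(τ)/B(τ) (a branch of −(i/2)·log(−A/B)), and set b(τ) := u(τ)(φ'(τ) − 2a/τ). Then b is constant on the domain (b'(τ) = 0), and u solves the degenerate third Painlevé equation dP3(a,b,ε). -/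

import Mathlib

open Complex

/-- The degenerate third Painlevé equation dP3(a,b,ε), stated pointwise at τ:
`u'' = (u')²/u − u'/τ + (1/τ)(−8εu² + 2ab) + b²/u`. -/
def DP3eq (a b ε : ℂ) (v : ℂ → ℂ) (τ : ℂ) : Prop :=
  deriv (deriv v) τ =
    (deriv v τ) ^ 2 / v τ - deriv v τ / τ
      + (1 / τ) * (-(8 * ε * (v τ) ^ 2) + 2 * a * b) + b ^ 2 / v τ

/-- `u(τ) := ε τ y(τ)`. -/
noncomputable def uOf (ε : ℂ) (y : ℂ → ℂ) : ℂ → ℂ := fun τ => ε * τ * y τ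

/-- `b(τ) := u(τ)(φ'(τ) − 2a/τ)`. -/
noncomputable def bOf (a ε : ℂ) (y φd : ℂ → ℂ) : ℂ → ℂ :=
  fun τ => uOf ε y τ * (φd τ - 2 * a / τ)

/-- The final algebraic identity needed for the Painlevé equation. -/
lemma finalAlg (a τ ε Aτ Bτ Cτ Dτ yτ : ℂ) (hτ0 : τ ≠ 0) (hy0 : yτ ≠ 0)
    (hB0 : Bτ ≠ 0) (hε : ε = 1 ∨ ε = -1) (h2 : yτ ^ 2 = -(Aτ * Bτ)) :
    2*ε*(Aτ*Dτ - Bτ*Cτ) + 2*ε*(8*τ*Cτ*Dτ*yτ + 4*τ*Aτ*Bτ - 2*a*Complex.I*(Aτ*Dτ + Bτ*Cτ))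
      = (ε*yτ + 2*ε*τ*(Aτ*Dτ - Bτ*Cτ))^2/(ε*τ*yτ) - (ε*yτ + 2*ε*τ*(Aτ*Dτ - Bτ*Cτ))/τ
        + (1/τ)*(-(8*ε*(ε*τ*yτ)^2)
            + 2*a*(2*Complex.I*ε*(Bτ*(τ*Cτ) + Aτ*(τ*Dτ)) - 2*a*ε*yτ))
        + (-(4*ε^2*(Bτ*(τ*Cτ) + Aτ*(τ*Dτ))^2)
            - 8*a*Complex.I*ε^2*(Bτ*(τ*Cτ) + Aτ*(τ*Dτ))*yτ + 4*a^2*ε^2*yτ^2)/(ε*τ*yτ) := by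
  rcases hε with rfl | rfl
  · field_simp
    linear_combination (16*τ^2*Cτ*Dτ + 8*τ^2*yτ) * h2
  · field_simp
    linear_combination (-(16*τ^2*Cτ*Dτ + 8*τ^2*yτ)) * h2

/-- Converse direction: solutions of the isomonodromy deformation system give
solutions of the degenerate third Painlevé equation; the quantity
`b(τ) := u(τ)(φ'(τ) − 2a/τ)` is constant. -/
theorem isomonodromy_to_painleve
    (S : Set ℂ) (hS : IsOpen S) (a ε : ℂ) (hε : ε = 1 ∨ ε = -1)
    (A B C D y φ φd : ℂ → ℂ)
    (hτ : ∀ τ ∈ S, τ ≠ 0)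
    (hvan : ∀ τ ∈ S, y τ ≠ 0 ∧ A τ ≠ 0 ∧ B τ ≠ 0)
    (hy2 : ∀ τ ∈ S, (y τ) ^ 2 = -(A τ * B τ))
    (hsys : ∀ τ ∈ S,
      HasDerivAt A (4 * C τ * y τ) τ ∧
      HasDerivAt B (-(4 * D τ * y τ)) τ ∧
      HasDerivAt (fun t => t * C t) (2 * a * Complex.I * C τ - 2 * τ * A τ) τ ∧
      HasDerivAt (fun t => t * D t) (-(2 * a * Complex.I * D τ) + 2 * τ * B τ) τ ∧
      HasDerivAt y (2 * (A τ * D τ - B τ * C τ)) τ)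
    (hφ : ∀ τ ∈ S, HasDerivAt φ (φd τ) τ)
    (hbranch : ∀ τ ∈ S, Complex.exp (2 * Complex.I * φ τ) = -(A τ / B τ)) :
    (∀ τ ∈ S, HasDerivAt (bOf a ε y φd) 0 τ) ∧
    (∀ τ ∈ S, DP3eq a (bOf a ε y φd τ) ε (uOf ε y) τ) := by
  have hI := Complex.I_sq
  -- the explicit formula for φd on S
  have key : ∀ τ ∈ S, φd τ = 2 * Complex.I * (B τ * C τ + A τ * D τ) / y τ := by
    intro τ hτS
    obtain ⟨hy0, hA0, hB0⟩ := hvan τ hτS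
    obtain ⟨hA', hB', hC', hD', hy'⟩ := hsys τ hτS
    have hg : HasDerivAt (fun t => Complex.exp (2 * Complex.I * φ t))
        (Complex.exp (2 * Complex.I * φ τ) * (2 * Complex.I * φd τ)) τ :=
      ((hφ τ hτS).const_mul (2 * Complex.I)).cexp
    have heq : (fun t => -(A t / B t)) =ᶠ[nhds τ] (fun t => Complex.exp (2 * Complex.I * φ t)) := by
      filter_upwards [hS.mem_nhds hτS] with t ht using (hbranch t ht).symm
    have hg2 := hg.congr_of_eventuallyEq heq
    have hg3 : HasDerivAt (fun t => -(A t / B t))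
        (-((4 * C τ * y τ * B τ - A τ * -(4 * D τ * y τ)) / B τ ^ 2)) τ := (hA'.div hB' hB0).neg
    have huniq := hg2.unique hg3
    rw [hbranch τ hτS] at huniq
    have h2 := hy2 τ hτS
    field_simp at huniq
    rw [eq_div_iff hy0]
    have hkey : (φd τ * y τ - 2*Complex.I*(B τ*C τ + A τ*D τ)) * (y τ * B τ) = 0 := by
      linear_combination (φd τ * B τ) * h2 + (-(Complex.I * B τ / 2)) * huniq
        + (-(A τ * B τ^2 * φd τ)) * hI
    exact sub_eq_zero.mp ((mul_eq_zero.mp hkey).resolve_right (mul_ne_zero hy0 hB0))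
  -- explicit formula for b on S
  have hbval : ∀ τ ∈ S, bOf a ε y φd τ
      = 2*Complex.I*ε*(B τ*(τ*C τ) + A τ*(τ*D τ)) - 2*a*ε*y τ := by
    intro τ hτS
    obtain ⟨hy0, hA0, hB0⟩ := hvan τ hτS
    have hτ0 := hτ τ hτS
    simp only [bOf, uOf, key τ hτS]
    field_simp
  -- part 1 : b is constant
  have part1 : ∀ τ ∈ S, HasDerivAt (bOf a ε y φd) 0 τ := by
    intro τ hτS
    obtain ⟨hA', hB', hC', hD', hy'⟩ := hsys τ hτS
    have h : HasDerivAt (fun t => 2*Complex.I*ε*(B t*(t*C t) + A t*(t*D t)) - 2*a*ε*y t)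
        (2*Complex.I*ε * ((-(4 * D τ * y τ)) * (τ * C τ)
            + B τ * (2 * a * Complex.I * C τ - 2 * τ * A τ)
          + ((4 * C τ * y τ) * (τ * D τ)
            + A τ * (-(2 * a * Complex.I * D τ) + 2 * τ * B τ)))
          - 2*a*ε * (2 * (A τ * D τ - B τ * C τ))) τ :=
      (((hB'.mul hC').add (hA'.mul hD')).const_mul (2*Complex.I*ε)).sub
        (hy'.const_mul (2*a*ε))
    have hV : (2*Complex.I*ε * ((-(4 * D τ * y τ)) * (τ * C τ)
            + B τ * (2 * a * Complex.I * C τ - 2 * τ * A τ)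
          + ((4 * C τ * y τ) * (τ * D τ)
            + A τ * (-(2 * a * Complex.I * D τ) + 2 * τ * B τ)))
          - 2*a*ε * (2 * (A τ * D τ - B τ * C τ))) = 0 := by
      linear_combination (4*a*ε*(B τ*C τ - A τ*D τ)) * hI
    rw [hV] at h
    exact h.congr_of_eventuallyEq
      (by filter_upwards [hS.mem_nhds hτS] with t ht using hbval t ht)
  refine ⟨part1, ?_⟩
  -- first derivative of u on S
  have hu' : ∀ σ ∈ S, HasDerivAt (uOf ε y)
      (ε*y σ + 2*ε*(A σ*(σ*D σ) - B σ*(σ*C σ))) σ := by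
    intro σ hσS
    obtain ⟨hA', hB', hC', hD', hy'⟩ := hsys σ hσS
    have h : HasDerivAt (uOf ε y) (ε * 1 * y σ + ε * σ * (2 * (A σ * D σ - B σ * C σ))) σ :=
      ((hasDerivAt_id σ).const_mul ε).mul hy'
    have hV : ε * 1 * y σ + ε * σ * (2 * (A σ * D σ - B σ * C σ))
        = ε*y σ + 2*ε*(A σ*(σ*D σ) - B σ*(σ*C σ)) := by ring
    rw [hV] at h
    exact h
  intro τ hτS
  obtain ⟨hy0, hA0, hB0⟩ := hvan τ hτS
  obtain ⟨hA', hB', hC', hD', hy'⟩ := hsys τ hτS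
  have hτ0 := hτ τ hτS
  have hEq : deriv (uOf ε y) =ᶠ[nhds τ]
      (fun t => ε*y t + 2*ε*(A t*(t*D t) - B t*(t*C t))) := by
    filter_upwards [hS.mem_nhds hτS] with t ht using (hu' t ht).deriv
  have hud : HasDerivAt (fun t => ε*y t + 2*ε*(A t*(t*D t) - B t*(t*C t)))
      (ε * (2 * (A τ * D τ - B τ * C τ))
        + 2*ε * ((4 * C τ * y τ) * (τ * D τ)
              + A τ * (-(2 * a * Complex.I * D τ) + 2 * τ * B τ)
            - ((-(4 * D τ * y τ)) * (τ * C τ)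
              + B τ * (2 * a * Complex.I * C τ - 2 * τ * A τ)))) τ :=
    (hy'.const_mul ε).add (((hA'.mul hD').sub (hB'.mul hC')).const_mul (2*ε))
  have hb2 : (bOf a ε y φd τ)^2
      = -(4*ε^2*(B τ*(τ*C τ) + A τ*(τ*D τ))^2)
        - 8*a*Complex.I*ε^2*(B τ*(τ*C τ) + A τ*(τ*D τ))*y τ + 4*a^2*ε^2*(y τ)^2 := by
    rw [hbval τ hτS]
    linear_combination (4*ε^2*(B τ*(τ*C τ) + A τ*(τ*D τ))^2) * hI
  unfold DP3eq
  rw [hEq.deriv_eq, hud.deriv, (hu' τ hτS).deriv, hb2, hbval τ hτS]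
  simp only [uOf]
  linear_combination finalAlg a τ ε (A τ) (B τ) (C τ) (D τ) (y τ) hτ0 hy0 hB0 hε (hy2 τ hτS)
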